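/- Let τ ∈ ℝ, let Ω ⊆ ℝ² be open, and let u, v : Ω → ℝ be C² functions with v_x² + v_y² < 1 satisfying the twin relations u_x = v_y/ω̃ − τy and u_y = −v_x/ω̃ + τx on Ω, where ω̃ = (1 − v_x² − v_y²)^(1/2). Then on Ω: u_xy² − u_xx u_yy = (v_xy² − v_xx v_yy)/(1 − v_x² − v_y²)² + τ². -/

import Mathlib

/-!
Write `a = v_x`, `b = v_y`, `ω̃ = √(1 - a² - b²)`, `P = b / ω̃` and `Q = -a / ω̃`, so that the twin
relations say `∇u = (P - τy, Q + τx)`. Then `u_xy = P_y - τ`, `u_yx = Q_x + τ`, and the symmetry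
`u_xy = u_yx` turns `u_xy² - u_xx u_yy` into `P_y Q_x - P_x Q_y + τ²`. The map
`(a, b) ↦ (b, -a) / √(1 - a² - b²)` has Jacobian determinant `(1 - a² - b²)⁻²`, so by the chain rule
`P_y Q_x - P_x Q_y = (v_xy v_yx - v_xx v_yy) / (1 - a² - b²)²`, and `v_xy = v_yx` finishes.
-/

noncomputable def px (f : ℝ × ℝ → ℝ) (p : ℝ × ℝ) : ℝ := fderiv ℝ f p (1, 0)

noncomputable def py (f : ℝ × ℝ → ℝ) (p : ℝ × ℝ) : ℝ := fderiv ℝ f p (0, 1)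

/-- Lorentzian area element `ω̃ = (1 − v_x² − v_y²)^(1/2)` of the graph of `v`. -/
noncomputable def omegT (v : ℝ × ℝ → ℝ) (p : ℝ × ℝ) : ℝ :=
  Real.sqrt (1 - (px v p) ^ 2 - (py v p) ^ 2)

section SecondDerivatives

variable {E F : Type*} [NormedAddCommGroup E] [NormedSpace ℝ E]
  [NormedAddCommGroup F] [NormedSpace ℝ F] {f : E → F} {p : E}

theorem ContDiffAt.differentiableAt_fderiv_apply (hf : ContDiffAt ℝ 2 f p) (z : E) :
    DifferentiableAt ℝ (fun q => fderiv ℝ f q z) p :=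
  ((hf.fderiv_right (m := 1) (by norm_num)).differentiableAt one_ne_zero).clm_apply
    (differentiableAt_const z)

theorem fderiv_fderiv_apply (hf : DifferentiableAt ℝ (fderiv ℝ f) p) (z w : E) :
    fderiv ℝ (fun q => fderiv ℝ f q z) p w = fderiv ℝ (fderiv ℝ f) p w z := by
  simp [fderiv_clm_apply hf (differentiableAt_const z)]

theorem ContDiffAt.fderiv_fderiv_apply_comm (hf : ContDiffAt ℝ 2 f p) (z w : E) :
    fderiv ℝ (fun q => fderiv ℝ f q z) p w = fderiv ℝ (fun q => fderiv ℝ f q w) p z := by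
  have hf' : DifferentiableAt ℝ (fderiv ℝ f) p :=
    (hf.fderiv_right (m := 1) (by norm_num)).differentiableAt one_ne_zero
  rw [fderiv_fderiv_apply hf', fderiv_fderiv_apply hf']
  exact (hf.isSymmSndFDerivAt (by simp)).eq w z

end SecondDerivatives

theorem py_px_eq_px_py {f : ℝ × ℝ → ℝ} {p : ℝ × ℝ} (hf : ContDiffAt ℝ 2 f p) :
    py (px f) p = px (py f) p :=
  hf.fderiv_fderiv_apply_comm (1, 0) (0, 1)

section DivSqrt

variable {E : Type*} [NormedAddCommGroup E] [NormedSpace ℝ E]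
  {A B N : E → ℝ} {A' B' N' : E →L[ℝ] ℝ} {p : E}

theorem HasFDerivAt.div_sqrt_one_sub_sq_sub_sq (hA : HasFDerivAt A A' p)
    (hB : HasFDerivAt B B' p) (hN : HasFDerivAt N N' p) (h : A p ^ 2 + B p ^ 2 < 1) :
    HasFDerivAt (fun q => N q / √(1 - A q ^ 2 - B q ^ 2))
      ((√(1 - A p ^ 2 - B p ^ 2))⁻¹ • N'
        + (N p / √(1 - A p ^ 2 - B p ^ 2) ^ 3) • (A p • A' + B p • B')) p := by
  have hpos : 0 < 1 - A p ^ 2 - B p ^ 2 := by linarith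
  have hw : 0 < √(1 - A p ^ 2 - B p ^ 2) := Real.sqrt_pos.mpr hpos
  have hsqrt : HasFDerivAt (fun q => √(1 - A q ^ 2 - B q ^ 2)) _ p :=
    (((hasFDerivAt_const 1 p).sub (hA.pow 2)).sub (hB.pow 2)).sqrt hpos.ne'
  have hinv : HasFDerivAt (fun q => (√(1 - A q ^ 2 - B q ^ 2))⁻¹) _ p :=
    (hasDerivAt_inv hw.ne').comp_hasFDerivAt p hsqrt
  simp only [div_eq_mul_inv]
  refine (hN.mul hinv).congr_fderiv (ContinuousLinearMap.ext fun z => ?_)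
  simp only [Pi.sub_apply, one_div, mul_inv_rev, Nat.add_one_sub_one, pow_one, nsmul_eq_mul,
    Nat.cast_ofNat, zero_sub, neg_smul, smul_neg, add_apply, neg_apply, smul_apply, sub_apply,
    smul_eq_mul, smul_add]
  field_simp
  ring

theorem det_fderiv_div_sqrt_one_sub_sq_sub_sq (hA : DifferentiableAt ℝ A p)
    (hB : DifferentiableAt ℝ B p) (h : A p ^ 2 + B p ^ 2 < 1) (x y : E) :
    fderiv ℝ (fun q => B q / √(1 - A q ^ 2 - B q ^ 2)) p x
        * fderiv ℝ (fun q => -A q / √(1 - A q ^ 2 - B q ^ 2)) p y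
      - fderiv ℝ (fun q => B q / √(1 - A q ^ 2 - B q ^ 2)) p y
        * fderiv ℝ (fun q => -A q / √(1 - A q ^ 2 - B q ^ 2)) p x
      = (fderiv ℝ A p x * fderiv ℝ B p y - fderiv ℝ A p y * fderiv ℝ B p x)
        / (1 - A p ^ 2 - B p ^ 2) ^ 2 := by
  have hpos : 0 < 1 - A p ^ 2 - B p ^ 2 := by linarith
  have hw : 0 < √(1 - A p ^ 2 - B p ^ 2) := Real.sqrt_pos.mpr hpos
  have hw2 : √(1 - A p ^ 2 - B p ^ 2) ^ 2 = 1 - A p ^ 2 - B p ^ 2 := Real.sq_sqrt hpos.le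
  have hA' := hA.hasFDerivAt
  have hB' := hB.hasFDerivAt
  rw [(hA'.div_sqrt_one_sub_sq_sub_sq hB' hB' h).fderiv,
    (hA'.div_sqrt_one_sub_sq_sub_sq hB' hA'.fun_neg h).fderiv]
  set w := √(1 - A p ^ 2 - B p ^ 2)
  -- both derivatives are one linear map applied to `(A', B')`, of determinant `(w² + A² + B²) / w⁴`
  calc _ = (w ^ 2 + A p ^ 2 + B p ^ 2)
          * (fderiv ℝ A p x * fderiv ℝ B p y - fderiv ℝ A p y * fderiv ℝ B p x) / (w ^ 2) ^ 2 := by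
        simp only [smul_add, add_apply, smul_apply, smul_eq_mul, smul_neg, neg_apply]
        field_simp
        ring
    _ = _ := by rw [hw2]; ring

end DivSqrt

open Filter Topology ContinuousLinearMap in
theorem neg_det_hessian_eq_of_eventuallyEq {u P Q : ℝ × ℝ → ℝ} {p : ℝ × ℝ} {τ : ℝ}
    (hu : ContDiffAt ℝ 2 u p) (hP : DifferentiableAt ℝ P p) (hQ : DifferentiableAt ℝ Q p)
    (hux : px u =ᶠ[𝓝 p] fun q => P q - τ * q.2) (huy : py u =ᶠ[𝓝 p] fun q => Q q + τ * q.1) :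
    py (px u) p ^ 2 - px (px u) p * py (py u) p = py P p * px Q p - px P p * py Q p + τ ^ 2 := by
  have hux' : fderiv ℝ (px u) p = fderiv ℝ P p - τ • snd ℝ ℝ ℝ :=
    hux.fderiv_eq.trans (hP.hasFDerivAt.sub ((snd ℝ ℝ ℝ).hasFDerivAt.const_mul τ)).fderiv
  have huy' : fderiv ℝ (py u) p = fderiv ℝ Q p + τ • fst ℝ ℝ ℝ :=
    huy.fderiv_eq.trans (hQ.hasFDerivAt.add ((fst ℝ ℝ ℝ).hasFDerivAt.const_mul τ)).fderiv
  have huxx : px (px u) p = px P p := by rw [px, hux']; simp [px]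
  have huxy : py (px u) p = py P p - τ := by rw [py, hux']; simp [py]
  have huyx : px (py u) p = px Q p + τ := by rw [px, huy']; simp [px]
  have huyy : py (py u) p = py Q p := by rw [py, huy']; simp [py]
  have hsymm := py_px_eq_px_py hu
  rw [huxy, huyx] at hsymm
  rw [huxx, huxy, huyy]
  linear_combination py P p * hsymm

/-- under the twin relations, the Hessian determinants of dual
graphs satisfy `u_xy² − u_xx u_yy = (v_xy² − v_xx v_yy)/(1 − v_x² − v_y²)² + τ²`,
i.e. `−det(Hess u) = K̃ + τ²` where `K̃` is the Gauss curvature of the graph of `v`. -/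
theorem hessian_determinants_of_dual_graphs (τ : ℝ) (Ω : Set (ℝ × ℝ)) (hΩ : IsOpen Ω)
    (u v : ℝ × ℝ → ℝ)
    (hu : ContDiffOn ℝ 2 u Ω) (hv : ContDiffOn ℝ 2 v Ω)
    (hsp : ∀ p ∈ Ω, (px v p) ^ 2 + (py v p) ^ 2 < 1)
    (htwinx : ∀ p ∈ Ω, px u p = py v p / omegT v p - τ * p.2)
    (htwiny : ∀ p ∈ Ω, py u p = -px v p / omegT v p + τ * p.1) :
    ∀ p ∈ Ω,
      (py (px u) p) ^ 2 - px (px u) p * py (py u) p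
        = ((py (px v) p) ^ 2 - px (px v) p * py (py v) p)
            / (1 - (px v p) ^ 2 - (py v p) ^ 2) ^ 2 + τ ^ 2 := by
  intro p hp
  have hpΩ : Ω ∈ nhds p := hΩ.mem_nhds hp
  have hv2 := hv.contDiffAt hpΩ
  have hvx : HasFDerivAt (px v) _ p := (hv2.differentiableAt_fderiv_apply (1, 0)).hasFDerivAt
  have hvy : HasFDerivAt (py v) _ p := (hv2.differentiableAt_fderiv_apply (0, 1)).hasFDerivAt
  set P : ℝ × ℝ → ℝ := fun q => py v q / √(1 - px v q ^ 2 - py v q ^ 2)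
  set Q : ℝ × ℝ → ℝ := fun q => -px v q / √(1 - px v q ^ 2 - py v q ^ 2)
  have hjac : py P p * px Q p - px P p * py Q p
      = (py (px v) p * px (py v) p - px (px v) p * py (py v) p)
        / (1 - px v p ^ 2 - py v p ^ 2) ^ 2 :=
    det_fderiv_div_sqrt_one_sub_sq_sub_sq hvx.differentiableAt hvy.differentiableAt
      (hsp p hp) (0, 1) (1, 0)
  rw [neg_det_hessian_eq_of_eventuallyEq (hu.contDiffAt hpΩ)
    (hvx.div_sqrt_one_sub_sq_sub_sq hvy hvy (hsp p hp)).differentiableAt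
    (hvx.div_sqrt_one_sub_sq_sub_sq hvy hvx.fun_neg (hsp p hp)).differentiableAt
    (Filter.eventuallyEq_of_mem hpΩ htwinx) (Filter.eventuallyEq_of_mem hpΩ htwiny),
    hjac, py_px_eq_px_py hv2]
  ring
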